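/- arXiv:1705.10116 — 7 statements merged into one kernel-verified Lean document; each statement's English description precedes it below -/
import Mathlib

section
/- The strict core of the simple symmetric fractional hedonic game represented by the cycle C_5 on five vertices is empty: for the 5-cycle graph, every partition of the vertex set admits a weakly blocking coalition. -/
open Finset
open scoped Classical

variable {V : Type*} [Fintype V] [DecidableEq V]

/-- The utility of player `i` in coalition `S` in the simple symmetric fractional
hedonic game given by the graph `G`: the number of neighbors of `i` in `S`
divided by the size of `S`. -/
noncomputable def util (G : SimpleGraph V) (i : V) (S : Finset V) : ℚ :=
  ((S.filter fun j => G.Adj i j).card : ℚ) / (S.card : ℚ)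

/-- A partition of the player set `V`, given by the block `part i` of each player `i`. -/
structure PlayerPartition (V : Type*) [Fintype V] [DecidableEq V] where
  part : V → Finset V
  mem_part : ∀ i, i ∈ part i
  part_eq : ∀ i j, j ∈ part i → part j = part i

/-- A nonempty coalition `S` blocks `π` if every member is strictly better off in `S`. -/
def Blocks (G : SimpleGraph V) (π : PlayerPartition V) (S : Finset V) : Prop :=
  S.Nonempty ∧ ∀ i ∈ S, util G i (π.part i) < util G i S

/-- A partition is in the core if no nonempty coalition blocks it. -/
def InCore (G : SimpleGraph V) (π : PlayerPartition V) : Prop :=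
  ∀ S : Finset V, ¬ Blocks G π S

/-- A nonempty coalition `S` weakly blocks `π` if every member is weakly better off
in `S` and some member is strictly better off. -/
def WeaklyBlocks (G : SimpleGraph V) (π : PlayerPartition V) (S : Finset V) : Prop :=
  S.Nonempty ∧ (∀ i ∈ S, util G i (π.part i) ≤ util G i S) ∧
    ∃ j ∈ S, util G j (π.part j) < util G j S

/-- A partition is in the strict core if no nonempty coalition weakly blocks it. -/
def InStrictCore (G : SimpleGraph V) (π : PlayerPartition V) : Prop :=
  ∀ S : Finset V, ¬ WeaklyBlocks G π S

/-- The cycle `C₅` on the vertices `{0,1,2,3,4}`, with edges `{i, i+1 mod 5}`. -/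
def C5 : SimpleGraph (Fin 5) := SimpleGraph.fromRel (fun i j => j = i + 1)

/- In `C₅` a player's utility exceeds `1/2` only as the middle of a block `{i-1, i, i+1}`;
then `i+1` (utility `1/3`) and `i+2` (utility at most `1/2`) weakly block as a pair, since an edge
gives both endpoints `1/2`. Otherwise every utility is at most `1/2`, and a player below `1/2`
weakly blocks together with a neighbour. So in the strict core everybody has utility exactly `1/2`,
which forces every block to have even size: impossible with five players. -/

namespace PlayerPartition

variable (π : PlayerPartition V)

theorem mem_part_iff {i j : V} : j ∈ π.part i ↔ π.part j = π.part i :=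
  ⟨π.part_eq i j, fun h => h ▸ π.mem_part j⟩

theorem even_card_of_forall_even_card_part (h : ∀ i, Even (π.part i).card) :
    Even (Fintype.card V) := by
  rw [← Finset.card_univ, Finset.card_eq_sum_card_image π.part]
  refine Finset.even_sum _ fun b hb => ?_
  obtain ⟨i, -, rfl⟩ := Finset.mem_image.mp hb
  have hfiber : ({j ∈ univ | π.part j = π.part i} : Finset V) = π.part i := by
    ext j
    simp [π.mem_part_iff]
  rw [hfiber]
  exact h i

end PlayerPartition

section Utility

variable {α : Type*} (G : SimpleGraph α)

theorem card_filter_adj_lt_card {i : α} {S : Finset α} (hi : i ∈ S) :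
    (S.filter (G.Adj i)).card < S.card :=
  Finset.card_lt_card <| Finset.filter_ssubset.mpr ⟨i, hi, G.irrefl⟩

theorem util_pair [DecidableEq α] {i j : α} (hij : G.Adj i j) : util G i {i, j} = 1 / 2 := by
  have hfilter : (({i, j} : Finset α).filter (G.Adj i)) = {j} := by
    ext k
    simp only [Finset.mem_filter, Finset.mem_insert, Finset.mem_singleton]
    constructor
    · rintro ⟨rfl | rfl, hk⟩
      exacts [absurd hk G.irrefl, rfl]
    · rintro rfl
      exact ⟨Or.inr rfl, hij⟩
  rw [util, hfilter, Finset.card_pair hij.ne]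
  norm_num

theorem util_le_half {i : α} {S : Finset α} (hi : i ∈ S)
    (h : (S.filter (G.Adj i)).card ≤ 1) : util G i S ≤ 1 / 2 := by
  have hlt := card_filter_adj_lt_card G hi
  rw [util, div_le_iff₀ (by exact_mod_cast hlt.trans_le' (Nat.zero_le _))]
  have : ((S.filter (G.Adj i)).card : ℚ) * 2 ≤ S.card := by
    norm_cast
    omega
  linarith

theorem even_card_of_util_eq_half {i : α} {S : Finset α} (h : util G i S = 1 / 2) :
    Even S.card := by
  have hS : (S.card : ℚ) ≠ 0 := by
    intro h0
    rw [util, h0, div_zero] at h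
    norm_num at h
  rw [util, div_eq_iff hS] at h
  have hcard : S.card = 2 * (S.filter (G.Adj i)).card := by
    exact_mod_cast (by linarith : (S.card : ℚ) = 2 * (S.filter (G.Adj i)).card)
  exact ⟨_, hcard.trans (two_mul _)⟩

end Utility

theorem weaklyBlocks_pair (G : SimpleGraph V) (π : PlayerPartition V) {i j : V} (hij : G.Adj i j)
    (hi : util G i (π.part i) < 1 / 2) (hj : util G j (π.part j) ≤ 1 / 2) :
    WeaklyBlocks G π {i, j} := by
  have hpair_j : util G j {i, j} = 1 / 2 := Finset.pair_comm j i ▸ util_pair G hij.symm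
  refine ⟨Finset.insert_nonempty _ _, ?_, i, Finset.mem_insert_self _ _, util_pair G hij ▸ hi⟩
  intro k hk
  rcases Finset.mem_insert.mp hk with rfl | hk
  · exact (util_pair G hij).symm ▸ hi.le
  · rw [Finset.mem_singleton.mp hk, hpair_j]
    exact hj

theorem C5_adj_iff {i j : Fin 5} : C5.Adj i j ↔ j = i + 1 ∨ j = i - 1 := by
  simp only [C5, SimpleGraph.fromRel_adj]
  revert i j
  decide

theorem filter_C5_adj_subset (i : Fin 5) (S : Finset (Fin 5)) :
    (S.filter (C5.Adj i)) ⊆ {i + 1, i - 1} := by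
  intro j hj
  simpa [C5_adj_iff] using (Finset.mem_filter.mp hj).2

theorem card_C5_neighbors (i : Fin 5) : ({i + 1, i - 1} : Finset (Fin 5)).card = 2 := by
  revert i
  decide

theorem card_C5_closedNeighbors (i : Fin 5) :
    ({i, i + 1, i - 1} : Finset (Fin 5)).card = 3 := by
  revert i
  decide

theorem card_filter_C5_adj_le_one {i j : Fin 5} {S : Finset (Fin 5)} (hij : C5.Adj i j)
    (hj : j ∉ S) : (S.filter (C5.Adj i)).card ≤ 1 := by
  have hsub : (S.filter (C5.Adj i)) ⊆ ({i + 1, i - 1} : Finset (Fin 5)).erase j :=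
    fun k hk => Finset.mem_erase.mpr
      ⟨fun hkj => hj (hkj ▸ (Finset.mem_filter.mp hk).1), filter_C5_adj_subset i S hk⟩
  have hcard : (({i + 1, i - 1} : Finset (Fin 5)).erase j).card = 1 := by
    rw [Finset.card_erase_of_mem (by simpa [C5_adj_iff] using hij), card_C5_neighbors]
  exact hcard ▸ Finset.card_le_card hsub

theorem eq_of_half_lt_util_C5 {i : Fin 5} {S : Finset (Fin 5)} (hi : i ∈ S)
    (h : 1 / 2 < util C5 i S) : S = {i, i + 1, i - 1} := by
  set N := S.filter (C5.Adj i)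
  have hlt : N.card < S.card := card_filter_adj_lt_card C5 hi
  have hN : N.card ≤ 2 :=
    (Finset.card_le_card (filter_C5_adj_subset i S)).trans Finset.card_le_two
  have hdouble : S.card < 2 * N.card := by
    rw [util, lt_div_iff₀ (by exact_mod_cast hlt.trans_le' (Nat.zero_le _))] at h
    exact_mod_cast (by linarith : (S.card : ℚ) < 2 * N.card)
  have hNeq : N = {i + 1, i - 1} :=
    Finset.eq_of_subset_of_card_le (filter_C5_adj_subset i S)
      (Finset.card_le_two.trans (by omega))
  have hsub : insert i N ⊆ S := Finset.insert_subset hi (Finset.filter_subset _ _)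
  rw [hNeq] at hsub
  exact (Finset.eq_of_subset_of_card_le hsub (by rw [card_C5_closedNeighbors]; omega)).symm

theorem exists_weaklyBlocks_C5_of_half_lt_util (π : PlayerPartition (Fin 5)) {i : Fin 5}
    (h : 1 / 2 < util C5 i (π.part i)) : ∃ S, WeaklyBlocks C5 π S := by
  have hblock := eq_of_half_lt_util_C5 (π.mem_part i) h
  have hnext : π.part (i + 1) = π.part i :=
    π.part_eq i _ (hblock ▸ by simp)
  have hfar_not_mem : i + 2 ∉ π.part i := by
    have key : ∀ k : Fin 5, k + 2 ∉ ({k, k + 1, k - 1} : Finset (Fin 5)) := by decide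
    exact hblock ▸ key i
  have hnext_not_mem : i + 1 ∉ π.part (i + 2) := fun hmem =>
    hfar_not_mem ((π.mem_part_iff.mp hmem).symm.trans hnext ▸ π.mem_part (i + 2))
  have hadj : C5.Adj (i + 1) (i + 2) := C5_adj_iff.mpr (Or.inl (add_assoc i 1 1).symm)
  refine ⟨_, weaklyBlocks_pair C5 π hadj ?_ <|
    util_le_half C5 (π.mem_part _) (card_filter_C5_adj_le_one hadj.symm hnext_not_mem)⟩
  have hone := card_filter_C5_adj_le_one hadj (hnext ▸ hfar_not_mem)
  have hthree : (π.part (i + 1)).card = 3 := by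
    rw [hnext, hblock, card_C5_closedNeighbors]
  rw [util, hthree, div_lt_iff₀ (by norm_num)]
  have : ((π.part (i + 1)).filter (C5.Adj (i + 1))).card ≤ (1 : ℚ) := by
    exact_mod_cast hone
  push_cast
  linarith

/-- The strict core of the simple symmetric fractional hedonic game given by the
5-cycle is empty: every partition admits a weakly blocking coalition. -/
theorem stmt_1 (π : PlayerPartition (Fin 5)) :
    ∃ S : Finset (Fin 5), WeaklyBlocks C5 π S := by
  by_cases hhigh : ∃ i, 1 / 2 < util C5 i (π.part i)
  · obtain ⟨i, hi⟩ := hhigh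
    exact exists_weaklyBlocks_C5_of_half_lt_util π hi
  push Not at hhigh
  by_cases hlow : ∃ i, util C5 i (π.part i) < 1 / 2
  · obtain ⟨i, hi⟩ := hlow
    exact ⟨_, weaklyBlocks_pair C5 π (C5_adj_iff.mpr (Or.inl rfl)) hi (hhigh (i + 1))⟩
  push Not at hlow
  have heven : Even (Fintype.card (Fin 5)) :=
    π.even_card_of_forall_even_card_part fun i =>
      even_card_of_util_eq_half C5 (le_antisymm (hhigh i) (hlow i))
  exact absurd heven (by decide)
end

section
/- The symmetric fractional hedonic game on the player set N = {1,…,6} with symmetric valuations given by v(1,2) = 7, v(1,3) = 5, v(2,3) = 6, v(3,4) = 7, v(3,5) = 5, v(4,5) = 6, v(5,6) = 7, v(5,1) = 5, v(6,1) = 6, v_i(i) = 0, and v(i,j) = −24 for all other unordered pairs {i,j}, has an empty core: every partition of N admits a blocking coalition. -/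
/-!
If no singleton blocks, nobody has negative utility; since every player's positive valuations
sum to at most `23 < 24`, no block then contains a `-24` pair. Among such coalitions, a member of
one of the triangles `{0,1,2}`, `{2,3,4}`, `{4,5,0}` weakly prefers his block to that triangle
only if his block is the triangle itself or the next one in this cyclic order. So for no triangle
to block, of each two consecutive triangles one must be a block of the partition; but the
triangles pairwise intersect, so at most one of them is a block.
-/

open Finset

/-- A partition of the player set `N`, given by the block `part i` of each player `i`. -/
structure FHGPartition (N : Type*) [Fintype N] [DecidableEq N] where
  part : N → Finset N
  mem_part : ∀ i, i ∈ part i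
  part_eq : ∀ i j, j ∈ part i → part j = part i

/-- The utility of player `i` in coalition `S` in the fractional hedonic game with
valuation functions `v`: the sum of `i`'s valuations of the members of `S`,
divided by the size of `S`. -/
noncomputable def wutil {N : Type*} [Fintype N] [DecidableEq N]
    (v : N → N → ℝ) (i : N) (S : Finset N) : ℝ :=
  (∑ j ∈ S, v i j) / (S.card : ℝ)

/-- The symmetric valuations of the 6-player game (players `0,…,5` standing for
`1,…,6`): `v 0 1 = 7`, `v 0 2 = 5`, `v 1 2 = 6`, `v 2 3 = 7`, `v 2 4 = 5`,
`v 3 4 = 6`, `v 4 5 = 7`, `v 4 0 = 5`, `v 5 0 = 6`, `v i i = 0`, and `-24`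
for all remaining pairs. -/
noncomputable def v3 : Fin 6 → Fin 6 → ℝ :=
  ![![0, 7, 5, -24, 5, 6],
    ![7, 0, 6, -24, -24, -24],
    ![5, 6, 0, 7, 5, -24],
    ![-24, -24, 7, 0, 6, -24],
    ![5, -24, 5, 6, 0, 7],
    ![6, -24, -24, -24, 7, 0]]

theorem FHGPartition.part_eq_part_of_mem_of_mem {N : Type*} [Fintype N] [DecidableEq N]
    (π : FHGPartition N) {i i' j : N} (h : j ∈ π.part i) (h' : j ∈ π.part i') :
    π.part i = π.part i' :=
  (π.part_eq i j h).symm.trans (π.part_eq i' j h')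

theorem wutil_intCast_le_iff {N : Type*} [Fintype N] [DecidableEq N] (v : N → N → ℤ) (i : N)
    {S T : Finset N} (hS : S.Nonempty) (hT : T.Nonempty) :
    wutil (fun a b => (v a b : ℝ)) i S ≤ wutil (fun a b => (v a b : ℝ)) i T ↔
      (∑ j ∈ S, v i j) * #T ≤ (∑ j ∈ T, v i j) * #S := by
  unfold wutil
  rw [div_le_div_iff₀ (by exact_mod_cast hS.card_pos) (by exact_mod_cast hT.card_pos)]
  beta_reduce
  norm_cast

def v3Int : Fin 6 → Fin 6 → ℤ :=
  ![![0, 7, 5, -24, 5, 6],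
    ![7, 0, 6, -24, -24, -24],
    ![5, 6, 0, 7, 5, -24],
    ![-24, -24, 7, 0, 6, -24],
    ![5, -24, 5, 6, 0, 7],
    ![6, -24, -24, -24, 7, 0]]

theorem v3Int_self (i : Fin 6) : v3Int i i = 0 := by
  revert i
  decide

theorem v3_eq_intCast : v3 = fun i j => (v3Int i j : ℝ) := by
  ext i j
  fin_cases i <;> fin_cases j <;> norm_num [v3, v3Int]

def triangle : Fin 3 → Finset (Fin 6) := ![{0, 1, 2}, {2, 3, 4}, {4, 5, 0}]

theorem triangle_nonempty (k : Fin 3) : (triangle k).Nonempty := by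
  revert k
  decide

theorem eq_triangle_or_succ_of_le (B : Finset (Fin 6)) (hB : ∀ j ∈ B, 0 ≤ ∑ l ∈ B, v3Int j l)
    (k : Fin 3) (i : Fin 6) (hiB : i ∈ B) (hik : i ∈ triangle k)
    (h : (∑ l ∈ triangle k, v3Int i l) * #B ≤ (∑ l ∈ B, v3Int i l) * #(triangle k)) :
    B = triangle k ∨ B = triangle (k + 1) := by
  revert B k i
  decide

theorem eq_of_part_eq_triangle (π : FHGPartition (Fin 6)) {i i' : Fin 6} {k k' : Fin 3}
    (h : π.part i = triangle k) (h' : π.part i' = triangle k') : k = k' := by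
  have htri : ∀ k k' : Fin 3, (triangle k ∩ triangle k').Nonempty := by decide
  have hinj : Function.Injective triangle := by decide
  obtain ⟨j, hj⟩ := htri k k'
  rw [mem_inter, ← h, ← h'] at hj
  exact hinj (h.symm.trans ((π.part_eq_part_of_mem_of_mem hj.1 hj.2).trans h'))

/-- The symmetric fractional hedonic game with valuations `v3` has an empty core:
every partition of the players admits a blocking coalition. -/
theorem stmt_3 (π : FHGPartition (Fin 6)) :
    ∃ S : Finset (Fin 6), S.Nonempty ∧
      ∀ i ∈ S, wutil v3 i (π.part i) < wutil v3 i S := by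
  by_contra! hcore
  rw [v3_eq_intCast] at hcore
  have hnonneg : ∀ i, ∀ j ∈ π.part i, 0 ≤ ∑ l ∈ π.part i, v3Int j l := by
    intro i j hj
    obtain ⟨_, hj', hle⟩ := hcore {j} (singleton_nonempty j)
    rw [mem_singleton.mp hj'] at hle
    rw [← π.part_eq i j hj]
    simpa [wutil_intCast_le_iff _ _ (singleton_nonempty j) ⟨j, π.mem_part j⟩, v3Int_self] using hle
  have hblock : ∀ k, ∃ i, π.part i = triangle k ∨ π.part i = triangle (k + 1) := by
    intro k
    obtain ⟨i, hik, hle⟩ := hcore (triangle k) (triangle_nonempty k)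
    rw [wutil_intCast_le_iff _ _ (triangle_nonempty k) ⟨i, π.mem_part i⟩] at hle
    exact ⟨i, eq_triangle_or_succ_of_le _ (hnonneg i) k i (π.mem_part i) hik hle⟩
  obtain ⟨i, hi⟩ := hblock 0
  obtain ⟨m, hm⟩ : ∃ m, π.part i = triangle m := hi.elim (⟨0, ·⟩) (⟨0 + 1, ·⟩)
  have hcover : ∀ k : Fin 3, m = k ∨ m = k + 1 := fun k => by
    obtain ⟨_, hi'⟩ := hblock k
    exact hi'.imp (eq_of_part_eq_triangle π hm) (eq_of_part_eq_triangle π hm)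
  exact (by decide : ¬ ∃ m : Fin 3, ∀ k : Fin 3, m = k ∨ m = k + 1) ⟨m, hcover⟩
end

section
/- For every simple symmetric fractional hedonic game represented by a finite simple graph in which every vertex has degree at most 2, the core is non-empty: there exists a partition of the vertex set that no coalition blocks. -/
/-!
When every degree is at most 2, a player's utility exceeds 1/2 only in the coalition made of
the player and its two neighbours, and every triangle is the closed neighbourhood of each of its
vertices. Take a maximal packing of disjoint triangles and of edges with no endpoint on a triangle,
and complete it by singletons. A packed player already has utility at least 1/2, so in a blocking
coalition `S` it and its block-mate both have `S` as closed neighbourhood; then `S` is a triangle,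
hence a block of the packing, and nobody improves. So a blocking coalition consists of unpacked
players; as every triangle is packed, an edge inside it is free and would extend the packing.
-/

open Finset
open scoped Classical

variable {V : Type*} [Fintype V] [DecidableEq V]

open SimpleGraph

namespace SimpleGraph

variable {α : Type*} {G : SimpleGraph α} {i v : α} {S T : Finset α}

lemma IsClique.erase_subset_neighborFinset [Fintype α] [DecidableEq α]
    (hS : G.IsClique (S : Set α)) (hi : i ∈ S) : S.erase i ⊆ G.neighborFinset i := fun j hj =>
  (mem_neighborFinset G i j).2 (hS hi (mem_of_mem_erase hj) (ne_of_mem_erase hj).symm)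

lemma IsNClique.erase_eq_neighborFinset [Fintype α] [DecidableEq α]
    (hdeg : ∀ v, G.degree v ≤ 2) (hT : G.IsNClique 3 T) (hv : v ∈ T) :
    T.erase v = G.neighborFinset v :=
  eq_of_subset_of_card_le (hT.isClique.erase_subset_neighborFinset hv) <| by
    rw [card_erase_of_mem hv, hT.card_eq, card_neighborFinset_eq_degree]
    exact hdeg v

lemma isNClique_three_of_erase_subset_neighborFinset [Fintype α] [DecidableEq α] {j : α}
    (hij : i ≠ j) (hS : #S = 3) (hiS : i ∈ S) (hjS : j ∈ S)
    (hi : S.erase i ⊆ G.neighborFinset i) (hj : S.erase j ⊆ G.neighborFinset j) :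
    G.IsNClique 3 S := by
  have huniv : ∀ u, S.erase u ⊆ G.neighborFinset u → ∀ w ∈ S, u ≠ w → G.Adj u w :=
    fun u hu w hw huw => (mem_neighborFinset G u w).1 (hu (mem_erase.2 ⟨huw.symm, hw⟩))
  refine ⟨fun a ha b hb hab => ?_, hS⟩
  by_cases ha' : a = i ∨ a = j
  · rcases ha' with rfl | rfl
    exacts [huniv a hi b hb hab, huniv a hj b hb hab]
  by_cases hb' : b = i ∨ b = j
  · rcases hb' with rfl | rfl
    exacts [(huniv b hi a ha (Ne.symm hab)).symm, (huniv b hj a ha (Ne.symm hab)).symm]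
  push Not at ha' hb'
  have : 2 < #(S.erase i) := two_lt_card_iff.2 ⟨j, a, b, mem_erase.2 ⟨hij.symm, hjS⟩,
    mem_erase.2 ⟨ha'.1, ha⟩, mem_erase.2 ⟨hb'.1, hb⟩, Ne.symm ha'.2, Ne.symm hb'.2, hab⟩
  rw [card_erase_of_mem hiS, hS] at this
  omega

end SimpleGraph

section Utility

variable {α : Type*} {G : SimpleGraph α} {i : α} {S : Finset α}

lemma filter_adj_subset_neighborFinset [Fintype α] :
    (S.filter fun j => G.Adj i j) ⊆ G.neighborFinset i := fun j hj =>
  (mem_neighborFinset G i j).2 (mem_filter.1 hj).2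

lemma filter_adj_subset_erase [DecidableEq α] :
    (S.filter fun j => G.Adj i j) ⊆ S.erase i := fun _ hj =>
  mem_erase.2 ⟨(mem_filter.1 hj).2.ne', (mem_filter.1 hj).1⟩

lemma util_of_isClique [DecidableEq α] (hS : G.IsClique (S : Set α)) (hi : i ∈ S) :
    util G i S = (#S - 1) / #S := by
  have hfilter : (S.filter fun j => G.Adj i j) = S.erase i :=
    filter_adj_subset_erase.antisymm fun j hj =>
      mem_filter.2 ⟨mem_of_mem_erase hj, hS hi (mem_of_mem_erase hj) (ne_of_mem_erase hj).symm⟩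
  rw [util, hfilter, cast_card_erase_of_mem hi]

lemma util_singleton : util G i {i} = 0 := by
  simp [util, filter_singleton]

lemma half_le_util_of_isClique [DecidableEq α] (hS : G.IsClique (S : Set α)) (hi : i ∈ S)
    (h2 : 2 ≤ #S) : 1 / 2 ≤ util G i S := by
  have h2' : (2 : ℚ) ≤ #S := by exact_mod_cast h2
  rw [util_of_isClique hS hi, div_le_div_iff₀ two_pos (by linarith)]
  linarith

lemma exists_adj_of_util_pos (h : 0 < util G i S) : ∃ j ∈ S, G.Adj i j := by
  by_contra! hS
  simp [util, filter_false_of_mem hS] at h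

lemma erase_eq_neighborFinset_of_half_lt_util [Fintype α] [DecidableEq α]
    (hdeg : ∀ v, G.degree v ≤ 2) (hi : i ∈ S) (h : 1 / 2 < util G i S) :
    S.erase i = G.neighborFinset i ∧ #S = 3 := by
  have hdeg_i := hdeg i
  have hk_deg := card_le_card (filter_adj_subset_neighborFinset (G := G) (i := i) (S := S))
  have hk_erase := card_le_card (filter_adj_subset_erase (G := G) (i := i) (S := S))
  rw [card_neighborFinset_eq_degree] at hk_deg
  rw [card_erase_of_mem hi] at hk_erase
  have hS : #S < 2 * #(S.filter fun j => G.Adj i j) := by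
    have hSpos : (0 : ℚ) < #S := by exact_mod_cast card_pos.2 ⟨i, hi⟩
    rw [util, div_lt_div_iff₀ two_pos hSpos] at h
    exact_mod_cast (by linarith : (#S : ℚ) < 2 * #(S.filter fun j => G.Adj i j))
  have hfilter_nbr : (S.filter fun j => G.Adj i j) = G.neighborFinset i :=
    eq_of_subset_of_card_le filter_adj_subset_neighborFinset
      (by rw [card_neighborFinset_eq_degree]; omega)
  have hfilter_erase : (S.filter fun j => G.Adj i j) = S.erase i :=
    eq_of_subset_of_card_le filter_adj_subset_erase (by rw [card_erase_of_mem hi]; omega)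
  exact ⟨hfilter_erase ▸ hfilter_nbr, by omega⟩

end Utility

section Packing

variable {α : Type*}

structure IsMaximalPacking (P : Finset α → Prop) (B : Finset (Finset α)) : Prop where
  prop : ∀ b ∈ B, P b
  pairwiseDisjoint : (B : Set (Finset α)).PairwiseDisjoint id
  exists_not_disjoint : ∀ b, P b → b.Nonempty → ∃ c ∈ B, ¬ Disjoint b c

lemma exists_isMaximalPacking [Fintype α] [DecidableEq α] (P : Finset α → Prop) :
    ∃ B, IsMaximalPacking P B := by
  obtain ⟨B, hB⟩ := Set.Finite.exists_maximal (Set.toFinite _)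
    (⟨∅, by simp⟩ : {B : Finset (Finset α) |
      (∀ b ∈ B, P b) ∧ (B : Set (Finset α)).PairwiseDisjoint id}.Nonempty)
  refine ⟨B, hB.prop.1, hB.prop.2, fun b hb hne => ?_⟩
  by_contra! hdisj
  have hins : (∀ c ∈ insert b B, P c) ∧
      ((insert b B : Finset (Finset α)) : Set (Finset α)).PairwiseDisjoint id :=
    ⟨forall_mem_insert _ _ _ |>.2 ⟨hb, hB.prop.1⟩,
      coe_insert b B ▸ hB.prop.2.insert fun c hc _ => hdisj c hc⟩
  have hbB : b ∈ B := hB.2 hins (subset_insert b B) (mem_insert_self b B)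
  exact hne.ne_empty (disjoint_self_iff_empty b |>.1 (hdisj b hbB))

end Packing

namespace PlayerPartition

variable {α : Type*} {B : Finset (Finset α)} {b : Finset α} {i : α}

noncomputable def blockOf (B : Finset (Finset α)) (i : α) : Finset α :=
  if h : ∃ b ∈ B, i ∈ b then h.choose else {i}

lemma mem_blockOf : i ∈ blockOf B i := by
  unfold blockOf
  split_ifs with h
  exacts [h.choose_spec.2, mem_singleton_self i]

lemma blockOf_eq (hB : (B : Set (Finset α)).PairwiseDisjoint id) (hb : b ∈ B) (hi : i ∈ b) :
    blockOf B i = b := by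
  have h : ∃ b ∈ B, i ∈ b := ⟨b, hb, hi⟩
  rw [blockOf, dif_pos h]
  exact hB.elim h.choose_spec.1 hb (not_disjoint_iff.2 ⟨i, h.choose_spec.2, hi⟩)

lemma blockOf_eq_singleton (h : ∀ b ∈ B, i ∉ b) : blockOf B i = {i} := by
  rw [blockOf, dif_neg (by simpa using h)]

noncomputable def ofPairwiseDisjoint [Fintype α] [DecidableEq α] (B : Finset (Finset α))
    (hB : (B : Set (Finset α)).PairwiseDisjoint id) : PlayerPartition α where
  part := blockOf B
  mem_part _ := mem_blockOf
  part_eq i j hj := by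
    by_cases h : ∃ b ∈ B, i ∈ b
    · obtain ⟨b, hb, hib⟩ := h
      rw [blockOf_eq hB hb hib] at hj ⊢
      exact blockOf_eq hB hb hj
    · push Not at h
      rw [blockOf_eq_singleton h] at hj ⊢
      rw [mem_singleton.1 hj, blockOf_eq_singleton h]

@[simp]
lemma part_ofPairwiseDisjoint [Fintype α] [DecidableEq α]
    (hB : (B : Set (Finset α)).PairwiseDisjoint id) : (ofPairwiseDisjoint B hB).part = blockOf B :=
  rfl

end PlayerPartition

section DegreeAtMostTwo

variable {α : Type*} {G : SimpleGraph α} {B : Finset (Finset α)} {b S T : Finset α} {i : α}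

def InTriangle (G : SimpleGraph α) (v : α) : Prop :=
  ∃ T : Finset α, G.IsNClique 3 T ∧ v ∈ T

/-- Edges are only allowed away from triangles: an edge inside a triangle, with the third
vertex left alone, is blocked by the triangle. -/
def IsTriangleOrFreeEdge (G : SimpleGraph α) (b : Finset α) : Prop :=
  G.IsNClique 3 b ∨ (G.IsNClique 2 b ∧ ∀ v ∈ b, ¬ InTriangle G v)

lemma IsTriangleOrFreeEdge.isClique (h : IsTriangleOrFreeEdge G b) : G.IsClique (b : Set α) :=
  h.elim (·.isClique) (·.1.isClique)

lemma IsTriangleOrFreeEdge.two_le_card (h : IsTriangleOrFreeEdge G b) : 2 ≤ #b :=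
  h.elim (fun h => by rw [h.card_eq]; norm_num) (fun h => h.1.card_eq.ge)

lemma isTriangleOrFreeEdge_pair [DecidableEq α] {j : α} (hij : G.Adj i j)
    (hi : ¬ InTriangle G i) (hj : ¬ InTriangle G j) : IsTriangleOrFreeEdge G {i, j} :=
  Or.inr ⟨(isNClique_singleton.2 rfl).insert (by simpa using hij), by simp [hi, hj]⟩

variable [Fintype α] [DecidableEq α]

lemma IsMaximalPacking.mem_of_isNClique_three (hdeg : ∀ v, G.degree v ≤ 2)
    (hB : IsMaximalPacking (IsTriangleOrFreeEdge G) B) (hT : G.IsNClique 3 T) : T ∈ B := by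
  obtain ⟨c, hc, hTc⟩ :=
    hB.exists_not_disjoint T (Or.inl hT) (card_pos.1 (by simp [hT.card_eq]))
  obtain ⟨v, hvT, hvc⟩ := not_disjoint_iff.1 hTc
  rcases hB.prop c hc with hc3 | ⟨-, hc_free⟩
  · rwa [← insert_erase hvT, hT.erase_eq_neighborFinset hdeg hvT,
      ← hc3.erase_eq_neighborFinset hdeg hvc, insert_erase hvc]
  · exact absurd ⟨T, hT, hvT⟩ (hc_free v hvc)

lemma IsMaximalPacking.notMem_of_blocks (hdeg : ∀ v, G.degree v ≤ 2)
    (hB : IsMaximalPacking (IsTriangleOrFreeEdge G) B)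
    (hS : Blocks G (PlayerPartition.ofPairwiseDisjoint B hB.pairwiseDisjoint) S) (hi : i ∈ S)
    (hb : b ∈ B) : i ∉ b := by
  intro hib
  have hblock : ∀ v ∈ b, PlayerPartition.blockOf B v = b :=
    fun v hv => PlayerPartition.blockOf_eq hB.pairwiseDisjoint hb hv
  have hbP := hB.prop b hb
  have hhalf (v : α) (hvb : v ∈ b) (hvS : v ∈ S) : S.erase v = G.neighborFinset v ∧ #S = 3 :=
    erase_eq_neighborFinset_of_half_lt_util hdeg hvS <|
      (half_le_util_of_isClique hbP.isClique hvb hbP.two_le_card).trans_lt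
        (hblock v hvb ▸ hS.2 v hvS)
  obtain ⟨hSi, hS3⟩ := hhalf i hib hi
  have hbS : b ⊆ S := (erase_subset_iff_of_mem hi).1 <|
    (hbP.isClique.erase_subset_neighborFinset hib).trans (hSi ▸ erase_subset i S)
  obtain ⟨j, hjb, hji⟩ := exists_mem_ne hbP.two_le_card i
  -- `i` and `j` both see all of `S`, so `S` is a triangle and thus itself a block of the packing
  have hStri : G.IsNClique 3 S :=
    isNClique_three_of_erase_subset_neighborFinset hji.symm hS3 hi (hbS hjb) hSi.le
      (hhalf j hjb (hbS hjb)).1.le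
  have hbS_eq : b = S := hB.pairwiseDisjoint.elim hb (hB.mem_of_isNClique_three hdeg hStri)
    (not_disjoint_iff.2 ⟨i, hib, hi⟩)
  exact (hS.2 i hi).ne (by simp [hblock i hib, hbS_eq])

theorem IsMaximalPacking.inCore (hdeg : ∀ v, G.degree v ≤ 2)
    (hB : IsMaximalPacking (IsTriangleOrFreeEdge G) B) :
    InCore G (PlayerPartition.ofPairwiseDisjoint B hB.pairwiseDisjoint) := by
  intro S hS
  have huncovered : ∀ v ∈ S, ∀ b ∈ B, v ∉ b := fun v hv b hb =>
    hB.notMem_of_blocks hdeg hS hv hb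
  have hfree : ∀ v ∈ S, ¬ InTriangle G v := fun v hv ⟨T, hT, hvT⟩ =>
    huncovered v hv T (hB.mem_of_isNClique_three hdeg hT) hvT
  obtain ⟨i, hi⟩ := hS.1
  obtain ⟨j, hj, hij⟩ : ∃ j ∈ S, G.Adj i j := by
    have := hS.2 i hi
    rw [PlayerPartition.part_ofPairwiseDisjoint,
      PlayerPartition.blockOf_eq_singleton (huncovered i hi), util_singleton] at this
    exact exists_adj_of_util_pos this
  obtain ⟨c, hc, hdisj⟩ := hB.exists_not_disjoint {i, j}
    (isTriangleOrFreeEdge_pair hij (hfree i hi) (hfree j hj)) (insert_nonempty _ _)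
  obtain ⟨v, hv, hvc⟩ := not_disjoint_iff.1 hdisj
  exact huncovered v (insert_subset hi (singleton_subset_iff.2 hj) hv) c hc hvc

end DegreeAtMostTwo

/-- For every simple symmetric fractional hedonic game represented by a finite
simple graph in which every vertex has degree at most 2, the core is non-empty. -/
theorem stmt_4 (G : SimpleGraph V) (hdeg : ∀ v : V, (univ.filter fun w => G.Adj v w).card ≤ 2) :
    ∃ π : PlayerPartition V, InCore G π := by
  have hdeg' : ∀ v, G.degree v ≤ 2 := fun v => by
    rw [← card_neighborFinset_eq_degree, neighborFinset_eq_filter]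
    exact hdeg v
  obtain ⟨B, hB⟩ := exists_isMaximalPacking (IsTriangleOrFreeEdge G)
  exact ⟨_, hB.inCore hdeg'⟩
end

section
/- In every Bakers and Millers game, the partition consisting of the grand coalition {N} is in the strict core. -/
open Finset
open scoped Classical

variable {V : Type*} [Fintype V] [DecidableEq V]

/-- The complete multipartite graph of a Bakers and Millers game: the players `V`
are assigned types by `type : V → T`, and distinct players are adjacent iff they
have different types. -/
def bmGraph {V T : Type*} (type : V → T) : SimpleGraph V where
  Adj i j := type i ≠ type j
  symm := ⟨fun _ _ h => Ne.symm h⟩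
  loopless := ⟨fun _ h => h rfl⟩

/-!
A player's utility in a coalition of a Bakers and Millers game is one minus the share of its own
type in that coalition. So if `S` weakly blocks the grand coalition, every type present in `S` has
a share in `S` at most its share in `N`, strictly so for one type. Summing over the types present
in `S` gives `1 < 1`: their shares in `S` add up to `1` and their shares in `N` to at most `1`.
-/

noncomputable def typeShare {α T : Type*} (type : α → T) (A : Finset α) (θ : T) : ℚ :=
  (#{i ∈ A | type i = θ} : ℚ) / #A

lemma sum_typeShare_le_one {α T : Type*} (type : α → T) (A : Finset α) (Θ : Finset T) :
    ∑ θ ∈ Θ, typeShare type A θ ≤ 1 := by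
  rcases A.eq_empty_or_nonempty with rfl | hA
  · simp [typeShare]
  have hcard : (0 : ℚ) < #A := by exact_mod_cast hA.card_pos
  simp only [typeShare, ← sum_div, div_le_one hcard]
  exact_mod_cast (sum_card_fiberwise_eq_card_filter A Θ type).trans_le (card_filter_le _ _)

lemma sum_typeShare_image {α T : Type*} (type : α → T) {A : Finset α} (hA : A.Nonempty) :
    ∑ θ ∈ A.image type, typeShare type A θ = 1 := by
  have hcard : (0 : ℚ) < #A := by exact_mod_cast hA.card_pos
  simp only [typeShare, ← sum_div, div_eq_one_iff_eq hcard.ne']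
  exact_mod_cast (card_eq_sum_card_image type A).symm

lemma util_bmGraph {α T : Type*} (type : α → T) (i : α) {A : Finset α} (hA : A.Nonempty) :
    util (bmGraph type) i A = 1 - typeShare type A (type i) := by
  have hcard : (0 : ℚ) < #A := by exact_mod_cast hA.card_pos
  have hsplit := card_filter_add_card_filter_not (s := A) (fun j => type j = type i)
  have hadj : {j ∈ A | (bmGraph type).Adj i j} = {j ∈ A | ¬type j = type i} :=
    filter_congr fun j _ => ne_comm
  rw [util, typeShare, hadj, eq_sub_iff_add_eq, ← add_div, div_eq_one_iff_eq hcard.ne']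
  exact_mod_cast (add_comm _ _).trans hsplit

theorem stmt_6_general {T : Type*} (type : V → T) :
    InStrictCore (bmGraph type)
      ⟨fun _ => univ, fun i => mem_univ i, fun _ _ _ => rfl⟩ := by
  rintro S ⟨hS, hweak, j, hjS, hstrict⟩
  have huniv : (univ : Finset V).Nonempty := ⟨j, mem_univ j⟩
  simp only [util_bmGraph type _ huniv, util_bmGraph type _ hS, sub_le_sub_iff_left,
    sub_lt_sub_iff_left] at hweak hstrict
  have hlt : ∑ θ ∈ S.image type, typeShare type S θ < ∑ θ ∈ S.image type, typeShare type univ θ :=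
    sum_lt_sum (by simpa only [forall_mem_image] using hweak) ⟨_, mem_image_of_mem type hjS, hstrict⟩
  linarith [sum_typeShare_image type hS, sum_typeShare_le_one type univ (S.image type)]

/-- In every Bakers and Millers game, the partition consisting of the grand
coalition is in the strict core. -/
theorem stmt_6 {T : Type*} (type : V → T) (htypes : Function.Surjective type) :
    InStrictCore (bmGraph type)
      ⟨fun _ => univ, fun i => mem_univ i, fun _ _ _ => rfl⟩ :=
  stmt_6_general type
end

section
/- Let (N, ≿) be a Bakers and Millers game with types θ_1, …, θ_t and let π = {S_1, …, S_m} be a partition of N. Then π is in the strict core if and only if for every type θ ∈ {θ_1, …, θ_t} and all blocks S, S' ∈ π one has |S ∩ θ|/|S| = |S' ∩ θ|/|S'|. -/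
open Finset
open scoped Classical

variable {V : Type*} [Fintype V] [DecidableEq V]

/-! In a Bakers and Millers game the utility of `i` in a coalition `X` is `1 - r_X(θ(i))`, where
`r_X(θ)` is the share of type `θ` in `X`; so `i` prefers `S` to `X` iff `r_S(θ(i)) ≤ r_X(θ(i))`.

If all blocks share one profile `r`, a weakly blocking `S` would satisfy `r_S(θ) ≤ r(θ)` for every
type present in `S`, strictly for one; summing over those types gives `1 < 1`.

Conversely, let `r_C(θ) < r_D(θ)` for blocks `C`, `D`. If for some such pair of blocks and type the
block `C` contains a player `y` of type `θ`, replacing `y` in `C` by a player of type `θ` from `D`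
keeps the profile of `C` and strictly helps the newcomer. Otherwise each block contains only types
at which its share is at least that of any other block, and then `C ∪ D` weakly blocks, because
its share of each type is the mediant of the two shares and the type `θ` is absent from `C`.
-/

section TypeRatio

variable {α T : Type*} (type : α → T)

noncomputable def typeRatio (B : Finset α) (t : T) : ℚ :=
  ((B.filter fun x => type x = t).card : ℚ) / (B.card : ℚ)

lemma typeRatio_nonneg (B : Finset α) (t : T) : 0 ≤ typeRatio type B t := by
  unfold typeRatio; positivity

lemma exists_mem_of_typeRatio_pos {B : Finset α} {t : T} (h : 0 < typeRatio type B t) :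
    ∃ x ∈ B, type x = t := by
  by_contra! hB
  simp [typeRatio, filter_false_of_mem hB] at h

lemma sum_typeRatio_image {B : Finset α} (hB : B.Nonempty) :
    ∑ t ∈ B.image type, typeRatio type B t = 1 := by
  have hcard : (B.card : ℚ) ≠ 0 := by exact_mod_cast hB.card_pos.ne'
  unfold typeRatio
  rw [← Finset.sum_div, div_eq_one_iff_eq hcard]
  exact_mod_cast (card_eq_sum_card_image type B).symm

lemma sum_typeRatio_le_one (B : Finset α) (s : Finset T) :
    ∑ t ∈ s, typeRatio type B t ≤ 1 := by
  rcases B.eq_empty_or_nonempty with rfl | hB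
  · simp [typeRatio]
  unfold typeRatio
  rw [← Finset.sum_div, div_le_one (by exact_mod_cast hB.card_pos)]
  exact_mod_cast (sum_card_fiberwise_eq_card_filter B s type).trans_le (card_filter_le _ _)

lemma util_bmGraph_s7 (i : α) {X : Finset α} (hX : X.Nonempty) :
    util (bmGraph type) i X = 1 - typeRatio type X (type i) := by
  have hc : (X.card : ℚ) ≠ 0 := by exact_mod_cast hX.card_pos.ne'
  have hadj : (X.filter fun j => (bmGraph type).Adj i j) = X.filter fun x => ¬ type x = type i :=
    filter_congr fun x _ => ne_comm
  have hsplit := card_filter_add_card_filter_not (s := X) (fun x => type x = type i)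
  rw [util, typeRatio, hadj, eq_sub_iff_add_eq, ← add_div, add_comm, ← Nat.cast_add,
    hsplit, div_self hc]

variable [DecidableEq α]

lemma typeRatio_insert_erase {B : Finset α} {x y : α} (hx : x ∉ B) (hy : y ∈ B)
    (hxy : type x = type y) : typeRatio type (insert x (B.erase y)) = typeRatio type B := by
  ext t
  have hcard : (insert x (B.erase y)).card = B.card := by
    rw [card_insert_of_notMem (fun h => hx (mem_of_mem_erase h)), card_erase_add_one hy]
  suffices hfib : ((insert x (B.erase y)).filter fun z => type z = t).card =
      (B.filter fun z => type z = t).card by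
    rw [typeRatio, typeRatio, hcard, hfib]
  rw [filter_insert, filter_erase]
  by_cases hxt : type x = t
  · have hyt : y ∈ B.filter fun z => type z = t := mem_filter.mpr ⟨hy, hxy ▸ hxt⟩
    rw [if_pos hxt, card_insert_of_notMem fun h => hx (mem_filter.mp (mem_of_mem_erase h)).1,
      card_erase_add_one hyt]
  · rw [if_neg hxt, erase_eq_of_notMem]
    exact fun h => hxt (hxy.trans (mem_filter.mp h).2)

lemma typeRatio_union {B B' : Finset α} (h : Disjoint B B') (t : T) :
    typeRatio type (B ∪ B') t =
      (((B.filter fun x => type x = t).card : ℚ) + (B'.filter fun x => type x = t).card) /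
        ((B.card : ℚ) + B'.card) := by
  rw [typeRatio, filter_union, card_union_of_disjoint (disjoint_filter_filter h),
    card_union_of_disjoint h]
  push_cast
  rfl

lemma typeRatio_union_le_left {B B' : Finset α} (h : Disjoint B B') (hB : B.Nonempty) {t : T}
    (ht : typeRatio type B' t ≤ typeRatio type B t) :
    typeRatio type (B ∪ B') t ≤ typeRatio type B t := by
  rcases B'.eq_empty_or_nonempty with rfl | hB'
  · rw [union_empty]
  have hc : (0 : ℚ) < B.card := by exact_mod_cast hB.card_pos
  have hc' : (0 : ℚ) < B'.card := by exact_mod_cast hB'.card_pos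
  rw [typeRatio_union type h]
  unfold typeRatio at ht ⊢
  rw [div_le_div_iff₀ hc' hc] at ht
  rw [div_le_div_iff₀ (by positivity) hc]
  nlinarith

lemma typeRatio_union_lt_right {B B' : Finset α} (h : Disjoint B B') (hB : B.Nonempty) {t : T}
    (hBt : ∀ x ∈ B, type x ≠ t) (ht : 0 < typeRatio type B' t) :
    typeRatio type (B ∪ B') t < typeRatio type B' t := by
  have hB' : B'.Nonempty := by
    obtain ⟨x, hx, -⟩ := exists_mem_of_typeRatio_pos type ht
    exact ⟨x, hx⟩
  have hc : (0 : ℚ) < B.card := by exact_mod_cast hB.card_pos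
  have hnum : (0 : ℚ) < (B'.filter fun x => type x = t).card := by
    exact_mod_cast card_pos.mpr (filter_nonempty_iff.mpr (exists_mem_of_typeRatio_pos type ht))
  rw [typeRatio_union type h, filter_false_of_mem hBt, card_empty, Nat.cast_zero, zero_add]
  exact div_lt_div_of_pos_left hnum (by exact_mod_cast hB'.card_pos) (by linarith)

end TypeRatio

lemma PlayerPartition.disjoint_part (π : PlayerPartition V) {i j : V} (h : π.part i ≠ π.part j) :
    Disjoint (π.part i) (π.part j) :=
  disjoint_left.mpr fun _ hi hj => h ((π.part_eq i _ hi).symm.trans (π.part_eq j _ hj))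

section BakersMillers

variable {T : Type*} (type : V → T)

lemma weaklyBlocks_bmGraph_iff (π : PlayerPartition V) {S : Finset V} (hS : S.Nonempty) :
    WeaklyBlocks (bmGraph type) π S ↔
      (∀ i ∈ S, typeRatio type S (type i) ≤ typeRatio type (π.part i) (type i)) ∧
        ∃ j ∈ S, typeRatio type S (type j) < typeRatio type (π.part j) (type j) := by
  simp only [WeaklyBlocks, hS, true_and, util_bmGraph_s7 type _ hS,
    util_bmGraph_s7 type _ ⟨_, π.mem_part _⟩, sub_le_sub_iff_left, sub_lt_sub_iff_left]

lemma inStrictCore_bmGraph_of_typeRatio_eq (π : PlayerPartition V)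
    (h : ∀ (t : T) (i j : V), typeRatio type (π.part i) t = typeRatio type (π.part j) t) :
    InStrictCore (bmGraph type) π := by
  rintro S hblock
  have hS : S.Nonempty := hblock.1
  obtain ⟨hle, j, hj, hlt⟩ := (weaklyBlocks_bmGraph_iff type π hS).mp hblock
  have hdom : ∀ t ∈ S.image type, typeRatio type S t ≤ typeRatio type (π.part j) t := by
    rintro _ ht
    obtain ⟨i, hi, rfl⟩ := mem_image.mp ht
    exact (hle i hi).trans_eq (h _ i j)
  have := sum_lt_sum hdom ⟨type j, mem_image_of_mem type hj, hlt⟩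
  linarith [sum_typeRatio_image type hS, sum_typeRatio_le_one type (π.part j) (S.image type)]

lemma weaklyBlocks_insert_erase (π : PlayerPartition V) {i j x y : V}
    (hlt : typeRatio type (π.part i) (type x) < typeRatio type (π.part j) (type x))
    (hx : x ∈ π.part j) (hy : y ∈ π.part i) (hxy : type x = type y) :
    WeaklyBlocks (bmGraph type) π (insert x ((π.part i).erase y)) := by
  have hxi : x ∉ π.part i := fun hxi => hlt.ne (by rw [← π.part_eq i x hxi, π.part_eq j x hx])
  have hS := typeRatio_insert_erase type hxi hy hxy
  refine (weaklyBlocks_bmGraph_iff type π (insert_nonempty _ _)).mpr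
    ⟨fun z hz => ?_, x, mem_insert_self _ _, by rwa [hS, π.part_eq j x hx]⟩
  rcases mem_insert.mp hz with rfl | hz
  · rw [hS, π.part_eq j z hx]
    exact hlt.le
  · rw [hS, π.part_eq i z (mem_of_mem_erase hz)]

lemma weaklyBlocks_union (π : PlayerPartition V) {i j : V} {t : T}
    (hlt : typeRatio type (π.part i) t < typeRatio type (π.part j) t)
    (hi : ∀ z ∈ π.part i, typeRatio type (π.part j) (type z) ≤ typeRatio type (π.part i) (type z))
    (hj : ∀ z ∈ π.part j, typeRatio type (π.part i) (type z) ≤ typeRatio type (π.part j) (type z)) :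
    WeaklyBlocks (bmGraph type) π (π.part i ∪ π.part j) := by
  have hdisj := π.disjoint_part fun hij => hlt.ne (by rw [hij])
  have hit : ∀ z ∈ π.part i, type z ≠ t := fun z hz hzt => (hzt ▸ hi z hz).not_gt hlt
  obtain ⟨x, hx, rfl⟩ :=
    exists_mem_of_typeRatio_pos type ((typeRatio_nonneg type _ _).trans_lt hlt)
  refine (weaklyBlocks_bmGraph_iff type π ⟨x, mem_union_right _ hx⟩).mpr
    ⟨fun z hz => ?_, x, mem_union_right _ hx, ?_⟩
  · rcases mem_union.mp hz with hz | hz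
    · rw [π.part_eq i z hz]
      exact typeRatio_union_le_left type hdisj ⟨i, π.mem_part i⟩ (hi z hz)
    · rw [π.part_eq j z hz, union_comm]
      exact typeRatio_union_le_left type hdisj.symm ⟨z, hz⟩ (hj z hz)
  · rw [π.part_eq j x hx]
    exact typeRatio_union_lt_right type hdisj ⟨i, π.mem_part i⟩ hit
      ((typeRatio_nonneg type _ _).trans_lt hlt)

lemma not_inStrictCore_bmGraph_of_typeRatio_lt (π : PlayerPartition V) {i j : V} {t : T}
    (hlt : typeRatio type (π.part i) t < typeRatio type (π.part j) t) :
    ¬ InStrictCore (bmGraph type) π := by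
  intro hcore
  by_cases hswap : ∃ (i j y : V), typeRatio type (π.part i) (type y) <
      typeRatio type (π.part j) (type y) ∧ y ∈ π.part i
  · obtain ⟨i, j, y, hlt, hy⟩ := hswap
    obtain ⟨x, hx, hxy⟩ :=
      exists_mem_of_typeRatio_pos type ((typeRatio_nonneg type _ _).trans_lt hlt)
    exact hcore _ (weaklyBlocks_insert_erase type π (hxy ▸ hlt) hx hy hxy)
  · push Not at hswap
    exact hcore _ (weaklyBlocks_union type π hlt (fun z hz => not_lt.mp (hswap i j z · hz))
      (fun z hz => not_lt.mp (hswap j i z · hz)))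

end BakersMillers

theorem stmt_7_general {T : Type*} (type : V → T)
    (π : PlayerPartition V) :
    InStrictCore (bmGraph type) π ↔
      ∀ (t : T) (i j : V),
        (((π.part i).filter fun x => type x = t).card : ℚ) / ((π.part i).card : ℚ) =
          (((π.part j).filter fun x => type x = t).card : ℚ) / ((π.part j).card : ℚ) :=
  ⟨fun hcore _ _ _ => le_antisymm
      (not_lt.mp fun hlt => not_inStrictCore_bmGraph_of_typeRatio_lt type π hlt hcore)
      (not_lt.mp fun hlt => not_inStrictCore_bmGraph_of_typeRatio_lt type π hlt hcore),
    inStrictCore_bmGraph_of_typeRatio_eq type π⟩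

/-- A partition `π` of a Bakers and Millers game is in the strict core iff for
every type `t` and any two blocks `S`, `S'` of `π` one has
`|S ∩ θ_t| / |S| = |S' ∩ θ_t| / |S'|`. -/
theorem stmt_7 {T : Type*} (type : V → T) (htypes : Function.Surjective type)
    (π : PlayerPartition V) :
    InStrictCore (bmGraph type) π ↔
      ∀ (t : T) (i j : V),
        (((π.part i).filter fun x => type x = t).card : ℚ) / ((π.part i).card : ℚ) =
          (((π.part j).filter fun x => type x = t).card : ℚ) / ((π.part j).card : ℚ) :=
  stmt_7_general type π
end

section
/- Let G = (V, E) be a finite simple bipartite graph admitting a perfect matching M. Then the partition of V into the |V|/2 pairs of M is in the core of the associated simple symmetric fractional hedonic game; in particular, the core is non-empty. -/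
/-!
In the matching partition every player has utility `1/2`. Any nonempty coalition `S` has a
member on the larger of its two sides `S ∩ A`, `S \ A`; all of that member's neighbours in `S`
lie on the smaller side, so its utility in `S` is at most `1/2` and it does not strictly gain.
-/

open Finset
open scoped Classical

variable {V : Type*} [Fintype V] [DecidableEq V]

omit [Fintype V] in
theorem util_pair_of_adj {G : SimpleGraph V} {i j : V} (h : G.Adj i j) :
    util G i {i, j} = 1 / 2 := by
  have hfilter : ({i, j} : Finset V).filter (fun k => G.Adj i k) = {j} := by
    simp [filter_insert, filter_singleton, h]
  rw [util, hfilter, card_pair h.ne, card_singleton]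
  norm_num

omit [Fintype V] [DecidableEq V] in
theorem util_le_half_of_two_mul_card_adj_le {G : SimpleGraph V} {i : V} {S : Finset V}
    (h : 2 * #{j ∈ S | G.Adj i j} ≤ #S) : util G i S ≤ 1 / 2 := by
  rw [util]
  refine div_le_of_le_mul₀ (Nat.cast_nonneg _) (by norm_num) ?_
  have hQ : (2 * #{j ∈ S | G.Adj i j} : ℚ) ≤ #S := by exact_mod_cast h
  linarith

omit [Fintype V] in
theorem exists_two_mul_card_adj_le {G : SimpleGraph V} {A : Finset V}
    (hA : ∀ i ∈ A, ∀ j ∈ A, ¬ G.Adj i j) (hA' : ∀ i ∉ A, ∀ j ∉ A, ¬ G.Adj i j)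
    {S : Finset V} (hS : S.Nonempty) : ∃ i ∈ S, 2 * #{j ∈ S | G.Adj i j} ≤ #S := by
  have hsplit := card_inter_add_card_sdiff S A
  have hpos := hS.card_pos
  rcases le_total #(S ∩ A) #(S \ A) with hle | hle
  · obtain ⟨i, hi⟩ : (S \ A).Nonempty := by rw [← card_pos]; omega
    rw [mem_sdiff] at hi
    have hnbrs : {j ∈ S | G.Adj i j} ⊆ S ∩ A := fun j hj => by
      rw [mem_filter] at hj
      exact mem_inter.2 ⟨hj.1, by_contra fun hjA => hA' i hi.2 j hjA hj.2⟩
    exact ⟨i, hi.1, by have := card_le_card hnbrs; omega⟩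
  · obtain ⟨i, hi⟩ : (S ∩ A).Nonempty := by rw [← card_pos]; omega
    rw [mem_inter] at hi
    have hnbrs : {j ∈ S | G.Adj i j} ⊆ S \ A := fun j hj => by
      rw [mem_filter] at hj
      exact mem_sdiff.2 ⟨hj.1, fun hjA => hA i hi.2 j hjA hj.2⟩
    exact ⟨i, hi.1, by have := card_le_card hnbrs; omega⟩

/-- Let `G` be a finite simple bipartite graph (with bipartition `A`, `Aᶜ`) that
admits a perfect matching, given as an involution `m` matching every vertex `i` to
an adjacent vertex `m i`. Then the partition of the vertices into the matched
pairs `{i, m i}` is in the core; in particular, the core is non-empty. -/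
theorem stmt_14 (G : SimpleGraph V) (A : Finset V)
    (hA : ∀ i ∈ A, ∀ j ∈ A, ¬ G.Adj i j)
    (hA' : ∀ i ∉ A, ∀ j ∉ A, ¬ G.Adj i j)
    (m : V → V) (hadj : ∀ i, G.Adj i (m i)) (hinv : ∀ i, m (m i) = i) :
    InCore G
      ⟨fun i => {i, m i},
        fun i => Finset.mem_insert_self i _,
        by
          intro i j hj
          rcases Finset.mem_insert.mp hj with h | h
          · subst h; rfl
          · rw [Finset.mem_singleton] at h
            subst h
            show ({m i, m (m i)} : Finset V) = {i, m i}
            rw [hinv i, Finset.pair_comm]⟩ := by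
  rintro S ⟨hS, hblock⟩
  obtain ⟨i, hi, hhalf⟩ := exists_two_mul_card_adj_le hA hA' hS
  have hbetter : util G i {i, m i} < util G i S := hblock i hi
  rw [util_pair_of_adj (hadj i)] at hbetter
  exact (util_le_half_of_two_mul_card_adj_le hhalf).not_gt hbetter
end

section
/- For every finite simple bipartite graph that is k-regular for some k ≥ 1, the core of the associated simple symmetric fractional hedonic game is non-empty. -/
/-!
A `k`-regular graph with `k ≥ 1` satisfies Hall's condition globally: the `k * |S|` edges leaving a
set `S` land in its neighbourhood, each vertex of which absorbs at most `k` of them. So a regular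
bipartite graph has a perfect matching, and pairing every player with its partner gives everybody
utility `1/2`. A coalition blocking this partition would give each member more than `|S|/2`
neighbours inside `S`; as the neighbours of a vertex lie on the other side of the bipartition, both
sides of `S` would then contain more than half of `S`.
-/

open Finset
open scoped Classical

variable {V : Type*} [Fintype V] [DecidableEq V]

namespace SimpleGraph

variable {W : Type*} {G : SimpleGraph W}

theorem IsRegularOfDegree.ncard_le_ncard_iUnion_neighborSet [G.LocallyFinite] {k : ℕ}
    (hG : G.IsRegularOfDegree k) (hk : 0 < k) (s : Set W) :
    s.ncard ≤ (⋃ x ∈ s, G.neighborSet x).ncard := by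
  rcases s.finite_or_infinite with hs | hs
  swap
  · simp [hs.ncard]
  lift s to Finset W using hs
  set N := s.biUnion fun x => G.neighborFinset x
  have hN : (⋃ x ∈ (s : Set W), G.neighborSet x) = N := by
    ext; simp [N]
  rw [hN, Set.ncard_coe_finset, Set.ncard_coe_finset]
  have hcount : #s * k ≤ #N * k := by
    refine card_mul_le_card_mul G.Adj (fun a ha => ?_) (fun b _ => ?_)
    · rw [← hG a, ← card_neighborFinset_eq_degree]
      exact card_le_card fun b hb => (mem_bipartiteAbove G.Adj).2
        ⟨mem_biUnion.2 ⟨a, ha, hb⟩, (G.mem_neighborFinset a b).1 hb⟩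
    · rw [← hG b, ← card_neighborFinset_eq_degree]
      exact card_le_card fun a ha =>
        (G.mem_neighborFinset b a).2 ((mem_bipartiteBelow G.Adj).1 ha).2.symm
  exact Nat.le_of_mul_le_mul_right hcount hk

theorem IsBipartiteWith.card_filter_adj_le {s t : Set W} (h : G.IsBipartiteWith s t)
    (S : Finset W) {v : W} (hv : v ∈ s) : #{w ∈ S | G.Adj v w} ≤ #{w ∈ S | w ∈ t} :=
  card_le_card <| monotone_filter_right S fun _ _ => h.mem_of_mem_adj hv

theorem IsBipartiteWith.exists_two_mul_card_filter_adj_le {s t : Set W}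
    (h : G.IsBipartiteWith s t) {S : Finset W} (hS : S.Nonempty) :
    ∃ v ∈ S, 2 * #{w ∈ S | G.Adj v w} ≤ #S := by
  by_contra! hdense
  have hside : ∀ {s t : Set W}, G.IsBipartiteWith s t → ∀ {v}, v ∈ S → v ∈ s →
      #S < 2 * #{w ∈ S | w ∈ t} := fun {_ _} h {_} hvS hv =>
    (hdense _ hvS).trans_le (Nat.mul_le_mul_left 2 (h.card_filter_adj_le S hv))
  obtain ⟨v, hvS⟩ := hS
  obtain ⟨w, hw⟩ : {w ∈ S | G.Adj v w}.Nonempty := card_pos.1 (by have := hdense v hvS; omega)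
  have hhalves : #S < 2 * #{w ∈ S | w ∈ s} ∧ #S < 2 * #{w ∈ S | w ∈ t} := by
    rcases h.mem_of_adj (mem_filter.1 hw).2 with ⟨hv, -⟩ | ⟨hv, -⟩
    · have ht := hside h hvS hv
      obtain ⟨u, hu⟩ : {w ∈ S | w ∈ t}.Nonempty := card_pos.1 (by omega)
      exact ⟨hside h.symm (mem_filter.1 hu).1 (mem_filter.1 hu).2, ht⟩
    · have hs := hside h.symm hvS hv
      obtain ⟨u, hu⟩ : {w ∈ S | w ∈ s}.Nonempty := card_pos.1 (by omega)
      exact ⟨hs, hside h (mem_filter.1 hu).1 (mem_filter.1 hu).2⟩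
  have hdisj : #{w ∈ S | w ∈ s} + #{w ∈ S | w ∈ t} ≤ #S := by
    rw [← card_filter_add_card_filter_not (s := S) (· ∈ s)]
    exact Nat.add_le_add_left (card_le_card <| monotone_filter_right S
      fun _ _ hw => Set.disjoint_right.1 h.disjoint hw) _
  omega

theorem Subgraph.IsPerfectMatching.exists_involutive_adj {M : G.Subgraph}
    (hM : M.IsPerfectMatching) : ∃ m : W → W, Function.Involutive m ∧ ∀ v, G.Adj v (m v) := by
  choose m hm huniq using Subgraph.isPerfectMatching_iff.1 hM
  exact ⟨m, fun v => (huniq (m v) v (hm v).symm).symm, fun v => (hm v).adj_sub⟩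

end SimpleGraph

def PlayerPartition.ofInvolutive (m : V → V) (hm : Function.Involutive m) :
    PlayerPartition V where
  part i := {i, m i}
  mem_part i := mem_insert_self i _
  part_eq i j hj := by
    rcases mem_insert.1 hj with rfl | hj
    · rfl
    · rw [mem_singleton.1 hj, hm i, pair_comm]

theorem inCore_of_forall_half_le_util {G : SimpleGraph V} {s t : Set V}
    (h : G.IsBipartiteWith s t) (π : PlayerPartition V)
    (hπ : ∀ i, 1 / 2 ≤ util G i (π.part i)) : InCore G π := by
  rintro S ⟨hS, hblock⟩
  obtain ⟨i, hi, hsparse⟩ := h.exists_two_mul_card_filter_adj_le hS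
  have hgain := (hπ i).trans_lt (hblock i hi)
  rw [util, lt_div_iff₀ (by exact_mod_cast hS.card_pos)] at hgain
  have : (#S : ℚ) < 2 * #{j ∈ S | G.Adj i j} := by linarith
  exact_mod_cast this.not_ge (by exact_mod_cast hsparse)

/-- For every finite simple bipartite graph (with bipartition `A`, `Aᶜ`) that is
`k`-regular for some `k ≥ 1`, the core of the associated simple symmetric
fractional hedonic game is non-empty. -/
theorem stmt_16 (G : SimpleGraph V) (A : Finset V)
    (hA : ∀ i ∈ A, ∀ j ∈ A, ¬ G.Adj i j)
    (hA' : ∀ i ∉ A, ∀ j ∉ A, ¬ G.Adj i j)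
    (k : ℕ) (hk : 1 ≤ k)
    (hreg : ∀ v : V, (univ.filter fun w => G.Adj v w).card = k) :
    ∃ π : PlayerPartition V, InCore G π := by
  have hbip : G.IsBipartiteWith A (A : Set V)ᶜ := by
    refine ⟨disjoint_compl_right, fun v w hvw => ?_⟩
    by_cases hv : v ∈ A <;> by_cases hw : w ∈ A
    · exact absurd hvw (hA v hv w hw)
    · exact .inl ⟨hv, hw⟩
    · exact .inr ⟨hv, hw⟩
    · exact absurd hvw (hA' v hv w hw)
  have hregular : G.IsRegularOfDegree k := fun v => by
    rw [← G.card_neighborFinset_eq_degree, G.neighborFinset_eq_filter]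
    exact hreg v
  obtain ⟨M, hM⟩ := SimpleGraph.exists_isPerfectMatching_of_forall_ncard_le hbip
    (hregular.ncard_le_ncard_iUnion_neighborSet hk)
  obtain ⟨m, hm, hadj⟩ := hM.exists_involutive_adj
  exact ⟨.ofInvolutive m hm,
    inCore_of_forall_half_le_util hbip _ fun i => (util_pair_of_adj (hadj i)).ge⟩
end
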